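/- Let T be a labelled rooted tree and X^T its associated 2-Segal set. For any two elements b, b' ∈ X^T_1 and any b'' ∈ X^T_1, the number of elements c ∈ X^T_2 with d_0(c) = b, d_2(c) = b', and d_1(c) = b'' is at most 1. Consequently, in the Hall algebra of X^T, the product of two basis vectors is either 0 or a single basis vector. -/

import Mathlib

/-- A finite rooted tree, encoded as a finite partial order with a least element
(the root) in which the set of elements below any given vertex is totally
ordered.  Edges of the tree are the covering pairs of the order. -/
structure CutTree where
  V : Type
  [fintypeV : Fintype V]
  [decEq : DecidableEq V]
  [po : PartialOrder V]
  root : V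
  root_le : ∀ v : V, root ≤ v
  lower_total : ∀ v a b : V, a ≤ v → b ≤ v → a ≤ b ∨ b ≤ a

attribute [instance] CutTree.fintypeV CutTree.decEq CutTree.po

namespace CutTree

variable (T : CutTree)

/-- A subset of the vertices defines a lower subtree when it is downward closed. -/
def IsLower (L : Set T.V) : Prop := ∀ ⦃a b : T.V⦄, a ≤ b → b ∈ L → a ∈ L

/-- `L` defines a lower subforest of the admissible subforest with vertex set `H`. -/
def IsLowerIn (H L : Set T.V) : Prop :=
  L ⊆ H ∧ ∀ ⦃a b : T.V⦄, a ∈ H → b ∈ L → a ≤ b → a ∈ L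

/-- `H` is the vertex set of an admissible subforest: a difference of two nested
downward closed sets. -/
def IsAdmissible (H : Set T.V) : Prop :=
  ∃ A B : Set T.V, T.IsLower A ∧ T.IsLower B ∧ B ⊆ A ∧ H = A \ B

theorem isLower_empty : T.IsLower (∅ : Set T.V) := fun _ _ _ h => h.elim

theorem isAdmissible_empty : T.IsAdmissible (∅ : Set T.V) :=
  ⟨∅, ∅, T.isLower_empty, T.isLower_empty, le_rfl, by simp⟩

/-- An `n`-simplex of the 2-Segal set `X^T`: an admissible subforest `H = L 0`
together with a layering of cuts `H = L 0 ⊇ L 1 ⊇ ⋯ ⊇ L n = ∅` by lower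
subforests of `H`. -/
@[ext]
structure Simplex (T : CutTree) (n : ℕ) where
  L : Fin (n + 1) → Set T.V
  admissible : T.IsAdmissible (L 0)
  antitone : Antitone L
  lowerIn : ∀ i, T.IsLowerIn (L 0) (L i)
  last_eq : L (Fin.last n) = ∅

theorem isAdmissible_diff {H P Q : Set T.V} (hH : T.IsAdmissible H)
    (hP : T.IsLowerIn H P) (hQ : T.IsLowerIn H Q) (hQP : Q ⊆ P) :
    T.IsAdmissible (P \ Q) := by
  obtain ⟨A, B, hA, hB, hBA, rfl⟩ := hH
  have hlow : ∀ R : Set T.V, T.IsLowerIn (A \ B) R → T.IsLower (R ∪ B) := by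
    rintro R ⟨hRsub, hRcl⟩ a b hab hb
    rcases hb with hb | hb
    · have hbA : b ∈ A := (hRsub hb).1
      have haA : a ∈ A := hA hab hbA
      by_cases haB : a ∈ B
      · exact Or.inr haB
      · exact Or.inl (hRcl ⟨haA, haB⟩ hb hab)
    · exact Or.inr (hB hab hb)
  refine ⟨P ∪ B, Q ∪ B, hlow P hP, hlow Q hQ, Set.union_subset_union_left _ hQP, ?_⟩
  ext x
  constructor
  · rintro ⟨hxP, hxQ⟩
    have hxB : x ∉ B := (hP.1 hxP).2
    exact ⟨Or.inl hxP, by rintro (h | h) <;> [exact hxQ h; exact hxB h]⟩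
  · rintro ⟨hx1, hx2⟩
    rcases hx1 with hx1 | hx1
    · exact ⟨hx1, fun h => hx2 (Or.inl h)⟩
    · exact absurd (Or.inr hx1) hx2

/-- The action of a simplicial operator `α : [m] → [n]` on `X^T`. -/
def act {m n : ℕ} (α : Fin (m + 1) → Fin (n + 1)) (hα : Monotone α)
    (σ : T.Simplex n) : T.Simplex m where
  L j := σ.L (α j) \ σ.L (α (Fin.last m))
  admissible := by
    refine T.isAdmissible_diff σ.admissible (σ.lowerIn _) (σ.lowerIn _) ?_
    exact σ.antitone (hα (Fin.le_last _))
  antitone := by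
    intro j k hjk
    exact Set.diff_subset_diff_left (σ.antitone (hα hjk))
  lowerIn := by
    intro i
    constructor
    · exact Set.diff_subset_diff_left (σ.antitone (hα (Fin.zero_le _)))
    · rintro a b ⟨haL, haS⟩ ⟨hbL, _⟩ hab
      have ha0 : a ∈ σ.L 0 := (σ.lowerIn (α 0)).1 haL
      exact ⟨(σ.lowerIn (α i)).2 ha0 hbL hab, haS⟩
  last_eq := Set.diff_self

/-- The `i`-th face map `X^T_{n+1} → X^T_n`. -/
def face {n : ℕ} (i : Fin (n + 2)) : T.Simplex (n + 1) → T.Simplex n :=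
  T.act i.succAbove (Fin.strictMono_succAbove i).monotone

/-- The `i`-th degeneracy map `X^T_n → X^T_{n+1}`. -/
def degen {n : ℕ} (i : Fin (n + 1)) : T.Simplex n → T.Simplex (n + 1) :=
  T.act i.predAbove (Fin.predAbove_right_monotone i)

end CutTree

/-! A 2-simplex `c` of `X^T` is determined by its faces `d₀ c` and `d₂ c`: its cut `c.L 1` is
`d₀ c`, and its subforest `c.L 0 = (c.L 0 \ c.L 1) ∪ c.L 1` is `d₂ c ∪ d₀ c`. So for given `b, b'`
there is at most one `c` with `d₀ c = b` and `d₂ c = b'`, and it forces `b'' = d₁ c`. -/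

section Fiber

variable {α β γ δ : Type*} {f : α → β} {g : α → γ}

theorem Function.Injective.subsingleton_fiber
    (hfg : Function.Injective fun a => (f a, g a)) (h : α → δ) (b : β) (c : γ) (d : δ) :
    Subsingleton {a // f a = b ∧ g a = c ∧ h a = d} :=
  ⟨fun ⟨_, ha, hb, _⟩ ⟨_, ha', hb', _⟩ => Subtype.ext (hfg (Prod.ext (ha.trans ha'.symm)
    (hb.trans hb'.symm)))⟩

theorem Function.Injective.card_fiber_le_one
    (hfg : Function.Injective fun a => (f a, g a)) (h : α → δ) (b : β) (c : γ) (d : δ) :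
    Nat.card {a // f a = b ∧ g a = c ∧ h a = d} ≤ 1 :=
  have := hfg.subsingleton_fiber h b c d
  Finite.card_le_one_iff_subsingleton.2 this

theorem Function.Injective.card_fiber_eq_zero_or_unique
    (hfg : Function.Injective fun a => (f a, g a)) (h : α → δ) (b : β) (c : γ) :
    (∀ d, Nat.card {a // f a = b ∧ g a = c ∧ h a = d} = 0) ∨
      ∃ d, Nat.card {a // f a = b ∧ g a = c ∧ h a = d} = 1 ∧
        ∀ d' ≠ d, Nat.card {a // f a = b ∧ g a = c ∧ h a = d'} = 0 := by
  by_cases hex : ∃ a, f a = b ∧ g a = c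
  · obtain ⟨a, rfl, rfl⟩ := hex
    refine Or.inr ⟨h a, ?_, fun d' hd' => ?_⟩
    · have := hfg.subsingleton_fiber h (f a) (g a) (h a)
      have : Nonempty {a' // f a' = f a ∧ g a' = g a ∧ h a' = h a} := ⟨⟨a, rfl, rfl, rfl⟩⟩
      exact Nat.card_unique
    · have : IsEmpty {a' // f a' = f a ∧ g a' = g a ∧ h a' = d'} :=
        ⟨fun ⟨a', ha', hb', hd⟩ => hd' (hd ▸ congrArg h (hfg (Prod.ext ha' hb')))⟩
      exact Nat.card_of_isEmpty
  · refine Or.inl fun d => ?_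
    have : IsEmpty {a // f a = b ∧ g a = c ∧ h a = d} :=
      ⟨fun ⟨a, ha, hb, _⟩ => hex ⟨a, ha, hb⟩⟩
    exact Nat.card_of_isEmpty

end Fiber

namespace CutTree

variable {T : CutTree} {n : ℕ}

theorem Simplex.ext_castSucc {σ τ : T.Simplex n}
    (h : ∀ i : Fin n, σ.L i.castSucc = τ.L i.castSucc) : σ = τ := by
  ext1
  funext i
  induction i using Fin.lastCases with
  | last => rw [σ.last_eq, τ.last_eq]
  | cast i => exact h i

theorem face_castSucc_L (i : Fin (n + 1)) (σ : T.Simplex (n + 1)) (j : Fin (n + 1)) :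
    (T.face i.castSucc σ).L j = σ.L (i.castSucc.succAbove j) := by
  simp [face, act, Fin.succAbove_ne_last_last (Fin.castSucc_lt_last i).ne, σ.last_eq]

theorem face_last_L (σ : T.Simplex (n + 1)) (j : Fin (n + 1)) :
    (T.face (Fin.last (n + 1)) σ).L j = σ.L j.castSucc \ σ.L (Fin.last n).castSucc := by
  simp [face, act]

theorem face_zero_L_zero (c : T.Simplex 2) : (T.face 0 c).L 0 = c.L 1 :=
  face_castSucc_L (0 : Fin 2) c 0

theorem face_two_L_zero (c : T.Simplex 2) : (T.face 2 c).L 0 = c.L 0 \ c.L 1 :=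
  face_last_L c 0

theorem injective_face_zero_face_two :
    Function.Injective fun c : T.Simplex 2 => (T.face 0 c, T.face 2 c) := by
  intro c c' h
  obtain ⟨h₀, h₂⟩ := Prod.mk.inj h
  have hL₁ : c.L 1 = c'.L 1 := by rw [← face_zero_L_zero, ← face_zero_L_zero, h₀]
  have hL₀ : c.L 0 = c'.L 0 := by
    rw [← Set.sdiff_union_of_subset (c.antitone (Fin.zero_le 1)),
      ← Set.sdiff_union_of_subset (c'.antitone (Fin.zero_le 1)), ← face_two_L_zero,
      ← face_two_L_zero, h₂, hL₁]
  refine Simplex.ext_castSucc fun i => ?_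
  fin_cases i
  exacts [hL₀, hL₁]

end CutTree

theorem hall_structure_constants_le_one (T : CutTree) :
    (∀ b b' b'' : T.Simplex 1,
      Nat.card {c : T.Simplex 2 //
        T.face 0 c = b ∧ T.face 2 c = b' ∧ T.face 1 c = b''} ≤ 1) ∧
    (∀ b b' : T.Simplex 1,
      (∀ b'' : T.Simplex 1,
        Nat.card {c : T.Simplex 2 //
          T.face 0 c = b ∧ T.face 2 c = b' ∧ T.face 1 c = b''} = 0) ∨
      (∃ b'' : T.Simplex 1,
        Nat.card {c : T.Simplex 2 //
          T.face 0 c = b ∧ T.face 2 c = b' ∧ T.face 1 c = b''} = 1 ∧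
        ∀ b''' : T.Simplex 1, b''' ≠ b'' →
          Nat.card {c : T.Simplex 2 //
            T.face 0 c = b ∧ T.face 2 c = b' ∧ T.face 1 c = b'''} = 0)) :=
  ⟨CutTree.injective_face_zero_face_two.card_fiber_le_one (T.face 1),
    CutTree.injective_face_zero_face_two.card_fiber_eq_zero_or_unique (T.face 1)⟩
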